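/- arXiv:1905.12728 — 3 statements merged into one kernel-verified Lean document; each statement's English description precedes it below -/
import Mathlib

section
/- The classifier h defined by h(x) = − for x ∈ A and h(x) = the opposite of y(x) for x ∈ B (predicting the unfavourable class on the whole privileged group and the wrong label on every instance of the unprivileged group) satisfies Acc(h) = Neg(A)/|D| and SPD(h) = −1 + Pos(B)/|B|. This realises the fourth vertex of the octagon of Proposition 1. -/
open Finset

variable {α : Type*} [DecidableEq α]

/-- Number of instances in `S` whose true label is the favourable class `+`. -/
def PosCount (y : α → Bool) (S : Finset α) : ℕ := (S.filter fun x => y x = true).card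

/-- Number of instances in `S` whose true label is the unfavourable class `−`. -/
def NegCount (y : α → Bool) (S : Finset α) : ℕ := (S.filter fun x => y x = false).card

/-- Predicted favourable rate of classifier `h` on `S`. -/
noncomputable def pPlus (h : α → Bool) (S : Finset α) : ℝ :=
  (S.filter fun x => h x = true).card / S.card

/-- Predicted unfavourable rate of classifier `h` on `S`. -/
noncomputable def pMinus (h : α → Bool) (S : Finset α) : ℝ :=
  (S.filter fun x => h x = false).card / S.card

/-- Accuracy of classifier `h` on dataset `D` with ground truth `y`. -/
noncomputable def Accuracy (y : α → Bool) (D : Finset α) (h : α → Bool) : ℝ :=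
  (D.filter fun x => h x = y x).card / D.card

/-- Statistical Parity Difference of classifier `h`, privileged group `A`,
unprivileged group `D \ A`. -/
noncomputable def SPD (D A : Finset α) (h : α → Bool) : ℝ :=
  pPlus h A - pPlus h (D \ A)

section Octagon

variable {ι : Type*} {y h : ι → Bool}

theorem posCount_add_negCount (y : ι → Bool) (S : Finset ι) :
    PosCount y S + NegCount y S = S.card := by
  simpa [PosCount, NegCount] using card_filter_add_card_filter_not (s := S) (y · = true)

theorem pPlus_eq_zero_of_forall_eq_false {S : Finset ι} (hS : ∀ x ∈ S, h x = false) :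
    pPlus h S = 0 := by
  rw [pPlus, filter_false_of_mem (by simpa using hS), card_empty, Nat.cast_zero, zero_div]

theorem pPlus_eq_one_sub_of_forall_eq_not {S : Finset ι} (hS : S.Nonempty)
    (hflip : ∀ x ∈ S, h x = !y x) :
    pPlus h S = 1 - (PosCount y S : ℝ) / S.card := by
  have hflipped : S.filter (fun x => h x = true) = S.filter (fun x => y x = false) :=
    filter_congr fun x hx => by simp [hflip x hx]
  have hcard : (S.card : ℝ) ≠ 0 := by exact_mod_cast hS.card_pos.ne'
  rw [pPlus, hflipped, eq_sub_iff_add_eq, ← add_div, div_eq_one_iff_eq hcard]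
  exact_mod_cast (NegCount y S).add_comm _ ▸ posCount_add_negCount y S

theorem filter_correct_eq_of_subset [DecidableEq ι] {D A : Finset ι} (hSub : A ⊆ D)
    (hA : ∀ x ∈ A, h x = false) (hwrong : ∀ x ∈ D \ A, h x ≠ y x) :
    D.filter (fun x => h x = y x) = A.filter (fun x => y x = false) := by
  ext x
  simp only [mem_filter]
  by_cases hxA : x ∈ A
  · rw [hA x hxA, eq_comm]
    exact ⟨fun hx => ⟨hxA, hx.2⟩, fun hx => ⟨hSub hxA, hx.2⟩⟩
  · exact ⟨fun hx => absurd hx.2 (hwrong x (mem_sdiff.mpr ⟨hx.1, hxA⟩)),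
      fun hx => absurd hx.1 hxA⟩

end Octagon

theorem octagon_vertex_four_general (D A : Finset α) (y : α → Bool)
    (hSub : A ⊆ D) (hB : (D \ A).Nonempty)
    (h : α → Bool)
    (hhA : ∀ x ∈ A, h x = false) (hhB : ∀ x ∈ D \ A, h x = !(y x)) :
    Accuracy y D h = (NegCount y A : ℝ) / D.card ∧
    SPD D A h = -1 + (PosCount y (D \ A) : ℝ) / (D \ A).card := by
  have hwrong : ∀ x ∈ D \ A, h x ≠ y x := fun x hx => by simp [hhB x hx]
  constructor
  · rw [Accuracy, NegCount, filter_correct_eq_of_subset hSub hhA hwrong]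
  · rw [SPD, pPlus_eq_zero_of_forall_eq_false hhA, pPlus_eq_one_sub_of_forall_eq_not hB hhB]
    ring

/-- unfavourable on all of `A`, wrong label on all of `B = D \ A`:
fourth vertex of the octagon. -/
theorem octagon_vertex_four (D A : Finset α) (y : α → Bool)
    (hSub : A ⊆ D) (hD : D.Nonempty) (hA : A.Nonempty) (hB : (D \ A).Nonempty)
    (h : α → Bool)
    (hhA : ∀ x ∈ A, h x = false) (hhB : ∀ x ∈ D \ A, h x = !(y x)) :
    Accuracy y D h = (NegCount y A : ℝ) / D.card ∧
    SPD D A h = -1 + (PosCount y (D \ A) : ℝ) / (D \ A).card :=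
  octagon_vertex_four_general D A y hSub hB h hhA hhB
end

section
/- Achievability of the first octagon edge: for every integer k with 0 ≤ k ≤ Pos(A), there exists a classifier h (obtained from the perfect classifier by predicting the unfavourable class on exactly k true-positive instances of the privileged group A) such that Acc(h) = 1 − k/|D| and SPD(h) = (Pos(A)/|A| − Pos(B)/|B|) − k/|A|. Hence every lattice point on the segment between the perfect-classifier vertex and the second octagon vertex is achieved. -/
open Finset

variable {α : Type*} [DecidableEq α]

/-- achievability of the first octagon edge.  For every
`0 ≤ k ≤ PosCount(A)` the classifier obtained from the perfect one by predicting
the unfavourable class on exactly `k` true-positive instances of `A` has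
`Accuracy = 1 - k/|D|` and `SPD = (PosCount(A)/|A| - PosCount(B)/|B|) - k/|A|`. -/
theorem octagon_first_edge_achievable (D A : Finset α) (y : α → Bool)
    (hSub : A ⊆ D) (hD : D.Nonempty) (hA : A.Nonempty) (hB : (D \ A).Nonempty)
    (k : ℕ) (hk : k ≤ PosCount y A) :
    ∃ (h : α → Bool) (K : Finset α),
      K ⊆ A.filter (fun x => y x = true) ∧ K.card = k ∧
      (∀ x ∈ K, h x = false) ∧ (∀ x, x ∉ K → h x = y x) ∧
      Accuracy y D h = 1 - (k : ℝ) / D.card ∧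
      SPD D A h =
        ((PosCount y A : ℝ) / A.card - (PosCount y (D \ A) : ℝ) / (D \ A).card)
          - (k : ℝ) / A.card := by
  obtain ⟨K, hKsub, hKcard⟩ := Finset.exists_subset_card_eq hk
  refine ⟨fun x => if x ∈ K then false else y x, K, hKsub, hKcard, ?_, ?_, ?_, ?_⟩
  · intro x hx; simp [hx]
  · intro x hx; simp [hx]
  · -- Accuracy
    have hKy : ∀ x ∈ K, y x = true := fun x hx => (mem_filter.mp (hKsub hx)).2
    have hKA : K ⊆ A := fun x hx => (mem_filter.mp (hKsub hx)).1
    have hKD : K ⊆ D := hKA.trans hSub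
    have hfil : (D.filter fun x => (if x ∈ K then false else y x) = y x) = D \ K := by
      ext x
      simp only [mem_filter, mem_sdiff]
      constructor
      · rintro ⟨hxD, hx⟩
        refine ⟨hxD, fun hxK => ?_⟩
        rw [if_pos hxK, hKy x hxK] at hx; exact Bool.false_ne_true hx
      · rintro ⟨hxD, hxK⟩; exact ⟨hxD, by rw [if_neg hxK]⟩
    have hDpos : (0:ℝ) < D.card := by exact_mod_cast hD.card_pos
    rw [Accuracy, hfil, card_sdiff_of_subset hKD, hKcard,
      Nat.cast_sub (hKcard ▸ card_le_card hKD)]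
    field_simp
  · -- SPD
    have hKy : ∀ x ∈ K, y x = true := fun x hx => (mem_filter.mp (hKsub hx)).2
    have hKA : K ⊆ A := fun x hx => (mem_filter.mp (hKsub hx)).1
    have hApos : (0:ℝ) < A.card := by exact_mod_cast hA.card_pos
    have hfilA : (A.filter fun x => (if x ∈ K then false else y x) = true)
        = (A.filter fun x => y x = true) \ K := by
      ext x
      simp only [mem_filter, mem_sdiff]
      constructor
      · rintro ⟨hxA, hx⟩
        by_cases hxK : x ∈ K
        · rw [if_pos hxK] at hx; exact absurd hx Bool.false_ne_true
        · rw [if_neg hxK] at hx; exact ⟨⟨hxA, hx⟩, hxK⟩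
      · rintro ⟨⟨hxA, hxy⟩, hxK⟩; exact ⟨hxA, by rw [if_neg hxK]; exact hxy⟩
    have hfilB : ((D \ A).filter fun x => (if x ∈ K then false else y x) = true)
        = (D \ A).filter fun x => y x = true := by
      apply filter_congr
      intro x hx
      have hxK : x ∉ K := fun h => (mem_sdiff.mp hx).2 (hKA h)
      rw [if_neg hxK]
    have hcard : ((A.filter fun x => y x = true) \ K).card = PosCount y A - k := by
      rw [card_sdiff_of_subset hKsub, hKcard]; rfl
    rw [SPD, pPlus, pPlus, hfilA, hfilB, hcard,
      Nat.cast_sub hk]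
    unfold PosCount
    ring
end

section
/- Near-perfect fairness is reachable by flipping privileged-group positives: if the dataset's Statistical Parity Difference is nonnegative, i.e., Pos(A)/|A| − Pos(B)/|B| ≥ 0, then there exists an integer k with 0 ≤ k ≤ Pos(A) and a classifier h (obtained from the perfect classifier by predicting the unfavourable class on exactly k true-positive instances of A) such that |SPD(h)| ≤ 1/(2·|A|). In words: along the path of flips from the perfect classifier, perfect fairness for SPD is approached to within half a step size before the flips in A are exhausted. -/
open Finset

variable {α : Type*} [DecidableEq α]

theorem exists_nat_le_abs_sub_le_half {R : Type*} [Field R] [LinearOrder R]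
    [IsStrictOrderedRing R] [FloorSemiring R] {r : R} {n : ℕ} (hr₀ : 0 ≤ r) (hrn : r ≤ n) :
    ∃ k : ℕ, k ≤ n ∧ |r - k| ≤ 1 / 2 := by
  have hr' : 0 ≤ r + 1 / 2 := by positivity
  refine ⟨⌊r + 1 / 2⌋₊, Nat.lt_succ_iff.mp ?_, abs_le.mpr ⟨?_, ?_⟩⟩
  · rw [Nat.floor_lt hr']
    push_cast
    linarith
  · linarith [Nat.floor_le hr']
  · linarith [Nat.lt_floor_add_one (r + 1 / 2)]

def flipOn (K : Finset α) (y : α → Bool) : α → Bool := fun x => if x ∈ K then false else y x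

theorem filter_flipOn_eq_sdiff {K S : Finset α} {y : α → Bool}
    (hK : K ⊆ S.filter fun x => y x = true) :
    S.filter (fun x => flipOn K y x = true) = (S.filter fun x => y x = true) \ K := by
  ext x
  by_cases hx : x ∈ K
  · simp [flipOn, hx, (mem_filter.mp (hK hx)).1]
  · simp [flipOn, hx]

theorem filter_flipOn_of_disjoint {K S : Finset α} {y : α → Bool} (hKS : Disjoint K S) :
    S.filter (fun x => flipOn K y x = true) = S.filter fun x => y x = true :=
  filter_congr fun x hx => by simp [flipOn, disjoint_right.mp hKS hx]

theorem SPD_flipOn {D A K : Finset α} {y : α → Bool} (hK : K ⊆ A.filter fun x => y x = true) :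
    SPD D A (flipOn K y) = SPD D A y - K.card / A.card := by
  have hKA : Disjoint K (D \ A) :=
    disjoint_sdiff.mono_left (hK.trans (filter_subset _ _))
  unfold SPD pPlus
  rw [filter_flipOn_eq_sdiff hK, filter_flipOn_of_disjoint hKA,
    card_sdiff_of_subset hK, Nat.cast_sub (card_le_card hK)]
  ring

theorem SPD_mul_card_le_PosCount (D A : Finset α) (y : α → Bool) :
    SPD D A y * A.card ≤ PosCount y A := by
  have hB : 0 ≤ pPlus y (D \ A) := by unfold pPlus; positivity
  rcases A.eq_empty_or_nonempty with rfl | hA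
  · simp
  · have ha : (A.card : ℝ) ≠ 0 := by exact_mod_cast hA.card_pos.ne'
    change ((PosCount y A : ℝ) / A.card - _) * A.card ≤ _
    rw [sub_mul, div_mul_cancel₀ _ ha]
    linarith [mul_nonneg hB (Nat.cast_nonneg A.card)]

/-- `hpos` states `0 ≤ SPD D A y`, as `pPlus y S` unfolds to `PosCount y S / |S|`. Removing `k`
positives of `A` lowers the SPD by `k / |A|`, so `k` is taken nearest to `SPD D A y * |A|`. -/
theorem near_perfect_fairness_reachable_general (D A : Finset α) (y : α → Bool)
    (hA : A.Nonempty)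
    (hpos : 0 ≤ (PosCount y A : ℝ) / A.card - (PosCount y (D \ A) : ℝ) / (D \ A).card) :
    ∃ (k : ℕ) (h : α → Bool) (K : Finset α),
      k ≤ PosCount y A ∧
      K ⊆ A.filter (fun x => y x = true) ∧ K.card = k ∧
      (∀ x ∈ K, h x = false) ∧ (∀ x, x ∉ K → h x = y x) ∧
      |SPD D A h| ≤ 1 / (2 * A.card) := by
  have ha : (0 : ℝ) < A.card := by exact_mod_cast hA.card_pos
  obtain ⟨k, hkP, hk⟩ := exists_nat_le_abs_sub_le_half (mul_nonneg hpos ha.le)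
    (SPD_mul_card_le_PosCount D A y)
  obtain ⟨K, hKsub, rfl⟩ := exists_subset_card_eq (s := A.filter fun x => y x = true) hkP
  refine ⟨K.card, flipOn K y, K, hkP, hKsub, rfl, fun x hx => by simp [flipOn, hx],
    fun x hx => by simp [flipOn, hx], ?_⟩
  calc |SPD D A (flipOn K y)| = |SPD D A y * A.card - K.card| / A.card := by
        rw [SPD_flipOn hKsub, sub_div' ha.ne', abs_div, abs_of_pos ha]
    _ ≤ 1 / 2 / A.card := div_le_div_of_nonneg_right hk ha.le
    _ = 1 / (2 * A.card) := by rw [div_div]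

/-- if the dataset SPD is nonnegative, then flipping some number
`k ≤ PosCount(A)` of true positives of `A` to the unfavourable class, starting from
the perfect classifier, yields a classifier whose SPD is within half a step
size `1/(2|A|)` of perfect fairness. -/
theorem near_perfect_fairness_reachable (D A : Finset α) (y : α → Bool)
    (hSub : A ⊆ D) (hD : D.Nonempty) (hA : A.Nonempty) (hB : (D \ A).Nonempty)
    (hpos : 0 ≤ (PosCount y A : ℝ) / A.card - (PosCount y (D \ A) : ℝ) / (D \ A).card) :
    ∃ (k : ℕ) (h : α → Bool) (K : Finset α),
      k ≤ PosCount y A ∧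
      K ⊆ A.filter (fun x => y x = true) ∧ K.card = k ∧
      (∀ x ∈ K, h x = false) ∧ (∀ x, x ∉ K → h x = y x) ∧
      |SPD D A h| ≤ 1 / (2 * A.card) :=
  near_perfect_fairness_reachable_general D A y hA hpos
end
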